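/- arXiv:1205.0076 — 3 statements merged into one kernel-verified Lean document; each statement's English description precedes it below -/
import Mathlib

section
/- Assume the network topology T is tree-like and let f°∈F(λ0) be an equilibrium flow. Then the quantity d_0 produced by the backward recursion satisfies R(f°) ≤ d_0 ≤ C − λ0, where R(f°) is the minimal node residual capacity and C is the min-cut capacity of the network. -/
open Filter Set Topology MeasureTheory
open scoped BigOperators ENNReal

noncomputable section

/-- A flow network: a finite directed multigraph on node set `{0, 1, ..., n}`
(origin `0`, destination `n`) in which every link `e` satisfies `σ(e) < τ(e)`. -/
structure FlowNetwork where
  n : ℕ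
  npos : 0 < n
  E : Type
  fintE : Fintype E
  decE : DecidableEq E
  /-- the tail node σ(e) -/
  src : E → Fin (n + 1)
  /-- the head node τ(e) -/
  dst : E → Fin (n + 1)
  src_lt_dst : ∀ e, src e < dst e

attribute [instance] FlowNetwork.fintE FlowNetwork.decE

namespace FlowNetwork

variable (N : FlowNetwork)

def origin : Fin (N.n + 1) := 0

def destination : Fin (N.n + 1) := Fin.last N.n

/-- E⁺_v, the set of outgoing links of a node `v` -/
def outLinks (v : Fin (N.n + 1)) : Finset N.E :=
  Finset.univ.filter fun e => N.src e = v

/-- E⁻_v, the set of incoming links of a node `v` -/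
def inLinks (v : Fin (N.n + 1)) : Finset N.E :=
  Finset.univ.filter fun e => N.dst e = v

/-- `IsWalk p u w` : the list of links `p` forms a path leading from node `u` to node `w`. -/
def IsWalk : List N.E → Fin (N.n + 1) → Fin (N.n + 1) → Prop
  | [], u, w => u = w
  | e :: p, u, w => N.src e = u ∧ IsWalk p (N.dst e) w

/-- every node lies on a path from the origin to the destination -/
def Connected : Prop :=
  ∀ v, (∃ p, N.IsWalk p N.origin v) ∧ ∃ p, N.IsWalk p v N.destination

/-- tree-like topology: the only node reachable from the origin by two distinct paths
is the destination -/
def TreeLike : Prop :=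
  ∀ v p q, N.IsWalk p N.origin v → N.IsWalk q N.origin v → p ≠ q → v = N.destination

/-- `f ∈ F(λ0)`: the set of equilibrium flows for inflow `λ0`. -/
def IsEquilibriumFlow (fmax : N.E → ℝ) (lam0 : ℝ) (f : N.E → ℝ) : Prop :=
  (∀ e, f e ∈ Icc 0 (fmax e)) ∧
  (∑ e ∈ N.outLinks N.origin, f e = lam0) ∧
  ∀ v, v ≠ N.origin → v ≠ N.destination →
    ∑ e ∈ N.outLinks v, f e = ∑ e ∈ N.inLinks v, f e

/-- an origin-destination cut -/
def IsCut (U : Finset (Fin (N.n + 1))) : Prop := N.origin ∈ U ∧ N.destination ∉ U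

/-- E⁺_U, the links with tail in `U` and head outside `U` -/
def cutOutLinks (U : Finset (Fin (N.n + 1))) : Finset N.E :=
  Finset.univ.filter fun e => N.src e ∈ U ∧ N.dst e ∉ U

/-- E⁻_U, the links with tail outside `U` and head in `U` -/
def cutInLinks (U : Finset (Fin (N.n + 1))) : Finset N.E :=
  Finset.univ.filter fun e => N.src e ∉ U ∧ N.dst e ∈ U

/-- the capacity C(U) of a cut -/
def cutCapacity (fmax : N.E → ℝ) (U : Finset (Fin (N.n + 1))) : ℝ :=
  ∑ e ∈ N.cutOutLinks U, fmax e

/-- the min-cut capacity C of the network -/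
def minCutCapacity (fmax : N.E → ℝ) : ℝ :=
  sInf {c | ∃ U, N.IsCut U ∧ c = N.cutCapacity fmax U}

/-- the residual capacity R_v(f) of a node `v` -/
def residualCapacity (fmax f : N.E → ℝ) (v : Fin (N.n + 1)) : ℝ :=
  ∑ e ∈ N.outLinks v, (fmax e - f e)

/-- the minimal node residual capacity R(f) of the network -/
def minResidualCapacity (fmax f : N.E → ℝ) : ℝ :=
  sInf {r | ∃ v, v ≠ N.destination ∧ r = N.residualCapacity fmax f v}

/-- the set X_v(λ), viewed as vectors supported on E⁺_v -/
def Xset (fmax : N.E → ℝ) (v : Fin (N.n + 1)) (lam : ℝ) : Set (N.E → ℝ) :=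
  {x | (∀ e ∈ N.outLinks v, x e ∈ Icc 0 (fmax e)) ∧ (∀ e ∉ N.outLinks v, x e = 0) ∧
    ∑ e ∈ N.outLinks v, (fmax e - x e) ≤ lam}

/-- the cost c_v(x) = Σ_{e ∈ E⁺_v} min{x_e, d_{τ(e)}}, valued in `[0,∞]`
(with the convention `min{x, +∞} = x`) -/
def cval (d : Fin (N.n + 1) → ℝ≥0∞) (v : Fin (N.n + 1)) (x : N.E → ℝ) : ℝ≥0∞ :=
  ∑ e ∈ N.outLinks v, min (ENNReal.ofReal (x e)) (d (N.dst e))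

/-- `d` is the backward recursion: `d_n = +∞` and
`d_v = min { c_v(x) : x ∈ X_v(λ°_v) }` for `v < n`, where `λ°_v = Σ_{e ∈ E⁺_v} f°_e`. -/
def IsBackwardRecursion (fmax f : N.E → ℝ) (d : Fin (N.n + 1) → ℝ≥0∞) : Prop :=
  d N.destination = ⊤ ∧
  ∀ v, v ≠ N.destination →
    d v = sInf (N.cval d v '' N.Xset fmax v (∑ e ∈ N.outLinks v, f e))

end FlowNetwork

end

/-!
Lower bound: by downward induction every `d_v` is at least `R = R(f°)`. For `x ∈ X_v(λ°_v)`,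
either some coordinate `x_e` is at least `R`, or all of them are below `R` and then
`Σ x_e ≥ R_v(f°) ≥ R`; in both cases `c_v(x) ≥ Σ min{x_e, R} ≥ R`.

Upper bound: fix a minimum cut `U`. By downward induction over the nodes `v ∈ U` reachable from
the origin, `d_v + λ°_v` is at most the capacity of the cut links reachable from `v`: route the
full capacity into the links out of `v` staying in `U` and `f^max_e - f°_e` into those leaving `U`,
then use flow conservation and the induction hypothesis. Tree-likeness makes the sets of cut links
reachable through distinct links out of `v` disjoint, so these bounds add up.
-/

theorem Finset.le_sum_min_of_le_sum {ι M : Type*} [AddCommMonoid M] [LinearOrder M]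
    [CanonicallyOrderedAdd M] {s : Finset ι} {a : ι → M} {r : M} (h : r ≤ ∑ i ∈ s, a i) :
    r ≤ ∑ i ∈ s, min (a i) r := by
  by_cases hs : ∃ i ∈ s, r ≤ a i
  · obtain ⟨i, hi, hri⟩ := hs
    calc r = min (a i) r := (min_eq_right hri).symm
      _ ≤ ∑ i ∈ s, min (a i) r :=
        Finset.single_le_sum (f := fun i => min (a i) r) (fun _ _ => zero_le) hi
  · push Not at hs
    rwa [Finset.sum_congr rfl fun i hi => min_eq_left (hs i hi).le]

namespace FlowNetwork

variable {N : FlowNetwork}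

lemma mem_outLinks {e : N.E} {v : Fin (N.n + 1)} : e ∈ N.outLinks v ↔ N.src e = v := by
  simp [outLinks]

lemma mem_inLinks {e : N.E} {v : Fin (N.n + 1)} : e ∈ N.inLinks v ↔ N.dst e = v := by
  simp [inLinks]

lemma origin_ne_destination : N.origin ≠ N.destination := by
  simp [origin, destination, Fin.ext_iff, N.npos.ne]

lemma dst_ne_origin (e : N.E) : N.dst e ≠ N.origin :=
  ne_of_gt ((Fin.zero_le _).trans_lt (N.src_lt_dst e))

section Walks

lemma IsWalk.le {p : List N.E} {u w : Fin (N.n + 1)} (h : N.IsWalk p u w) : u ≤ w := by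
  induction p generalizing u with
  | nil => exact le_of_eq h
  | cons e p ih =>
    obtain ⟨rfl, h⟩ := h
    exact (N.src_lt_dst e).le.trans (ih h)

lemma IsWalk.append {p q : List N.E} {u v w : Fin (N.n + 1)} (hp : N.IsWalk p u v)
    (hq : N.IsWalk q v w) : N.IsWalk (p ++ q) u w := by
  induction p generalizing u with
  | nil => exact hp ▸ hq
  | cons e p ih => exact ⟨hp.1, ih hp.2⟩

def Reachable (N : FlowNetwork) (u w : Fin (N.n + 1)) : Prop := ∃ p, N.IsWalk p u w

lemma Reachable.le {u w : Fin (N.n + 1)} (h : N.Reachable u w) : u ≤ w :=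
  h.elim fun _ hp => hp.le

lemma Reachable.refl (u : Fin (N.n + 1)) : N.Reachable u u := ⟨[], rfl⟩

lemma Reachable.trans {u v w : Fin (N.n + 1)} (h₁ : N.Reachable u v) (h₂ : N.Reachable v w) :
    N.Reachable u w := by
  obtain ⟨p, hp⟩ := h₁
  obtain ⟨q, hq⟩ := h₂
  exact ⟨p ++ q, hp.append hq⟩

lemma reachable_src_dst (e : N.E) : N.Reachable (N.src e) (N.dst e) := ⟨[e], rfl, rfl⟩

lemma TreeLike.eq_destination_of_reachable (htree : N.TreeLike) {v w : Fin (N.n + 1)}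
    (hv : N.Reachable N.origin v) {e₁ e₂ : N.E} (he₁ : N.src e₁ = v) (he₂ : N.src e₂ = v)
    (hne : e₁ ≠ e₂) (h₁ : N.Reachable (N.dst e₁) w) (h₂ : N.Reachable (N.dst e₂) w) :
    w = N.destination := by
  obtain ⟨p, hp⟩ := hv
  obtain ⟨q₁, hq₁⟩ := h₁
  obtain ⟨q₂, hq₂⟩ := h₂
  exact htree w _ _ (hp.append (q := e₁ :: q₁) ⟨he₁, hq₁⟩)
    (hp.append (q := e₂ :: q₂) ⟨he₂, hq₂⟩) (by simp [hne])

end Walks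

section Capacities

variable (N)

lemma minResidualCapacity_le (fmax f : N.E → ℝ) {v : Fin (N.n + 1)} (hv : v ≠ N.destination) :
    N.minResidualCapacity fmax f ≤ N.residualCapacity fmax f v :=
  csInf_le ((finite_range (N.residualCapacity fmax f)).subset
    (by rintro r ⟨w, -, rfl⟩; exact ⟨w, rfl⟩)).bddBelow ⟨v, hv, rfl⟩

lemma exists_isCut_minCutCapacity_eq (fmax : N.E → ℝ) :
    ∃ U, N.IsCut U ∧ N.minCutCapacity fmax = N.cutCapacity fmax U := by
  have hne : {c | ∃ U, N.IsCut U ∧ c = N.cutCapacity fmax U}.Nonempty :=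
    ⟨_, _, ⟨Finset.mem_erase.2 ⟨origin_ne_destination, Finset.mem_univ _⟩,
      Finset.notMem_erase _ _⟩, rfl⟩
  exact hne.csInf_mem ((finite_range (N.cutCapacity fmax)).subset
    (by rintro c ⟨U, -, rfl⟩; exact ⟨U, rfl⟩))

open scoped Classical in
noncomputable def cutOutLinksFrom (U : Finset (Fin (N.n + 1))) (v : Fin (N.n + 1)) : Finset N.E :=
  (N.cutOutLinks U).filter fun g => N.Reachable v (N.src g)

variable {N}

lemma mem_cutOutLinksFrom {U : Finset (Fin (N.n + 1))} {v : Fin (N.n + 1)} {g : N.E} :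
    g ∈ N.cutOutLinksFrom U v ↔ (N.src g ∈ U ∧ N.dst g ∉ U) ∧ N.Reachable v (N.src g) := by
  simp [cutOutLinksFrom, cutOutLinks]

lemma cutOutLinksFrom_subset {U : Finset (Fin (N.n + 1))} {v : Fin (N.n + 1)} :
    N.cutOutLinksFrom U v ⊆ N.cutOutLinks U := by
  classical
  exact Finset.filter_subset _ _

open scoped Classical in
/-- Each link `e` out of `v` is charged with the cut links below `τ(e)` if `τ(e) ∈ U`, and with
`e` itself otherwise; tree-likeness makes the charged sets of distinct links disjoint. -/
lemma TreeLike.sum_sum_cutOutLinksFrom_le {M : Type*} [AddCommMonoid M] [PartialOrder M]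
    [CanonicallyOrderedAdd M] (htree : N.TreeLike) {U : Finset (Fin (N.n + 1))}
    (hU : N.destination ∉ U) {v : Fin (N.n + 1)} (hvU : v ∈ U) (hv : N.Reachable N.origin v)
    (c : N.E → M) :
    ∑ e ∈ N.outLinks v,
        ∑ g ∈ (if N.dst e ∈ U then N.cutOutLinksFrom U (N.dst e) else {e}), c g ≤
      ∑ g ∈ N.cutOutLinksFrom U v, c g := by
  have not_mem_below : ∀ e ∈ N.outLinks v, ∀ e' ∈ N.outLinks v,
      e' ∉ N.cutOutLinksFrom U (N.dst e) := fun e he e' he' h => by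
    have hle := (mem_cutOutLinksFrom.1 h).2.le
    rw [mem_outLinks.1 he'] at hle
    exact (mem_outLinks.1 he ▸ N.src_lt_dst e).not_ge hle
  rw [← Finset.sum_biUnion]
  · refine Finset.sum_le_sum_of_subset fun g hg => ?_
    obtain ⟨e, he, hg⟩ := Finset.mem_biUnion.1 hg
    split_ifs at hg with heU
    · obtain ⟨hgU, hreach⟩ := mem_cutOutLinksFrom.1 hg
      exact mem_cutOutLinksFrom.2
        ⟨hgU, (mem_outLinks.1 he ▸ reachable_src_dst e).trans hreach⟩
    · rw [Finset.mem_singleton.1 hg, mem_cutOutLinksFrom, mem_outLinks.1 he]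
      exact ⟨⟨hvU, heU⟩, Reachable.refl v⟩
  · intro e₁ he₁ e₂ he₂ hne
    dsimp only [Function.onFun]
    split_ifs with h₁ h₂ h₂
    · refine Finset.disjoint_left.2 fun g hg₁ hg₂ => ?_
      obtain ⟨⟨hgU, -⟩, hr₁⟩ := mem_cutOutLinksFrom.1 hg₁
      exact hU (htree.eq_destination_of_reachable hv (mem_outLinks.1 he₁)
        (mem_outLinks.1 he₂) hne hr₁ (mem_cutOutLinksFrom.1 hg₂).2 ▸ hgU)
    · exact Finset.disjoint_singleton_right.2 (not_mem_below e₁ he₁ e₂ he₂)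
    · exact Finset.disjoint_singleton_left.2 (not_mem_below e₂ he₂ e₁ he₁)
    · exact Finset.disjoint_singleton.2 hne

end Capacities

section BackwardRecursion

variable {fmax f : N.E → ℝ} {d : Fin (N.n + 1) → ℝ≥0∞}

lemma IsEquilibriumFlow.ofReal_le_sum_outLinks_dst {lam0 : ℝ}
    (hf : N.IsEquilibriumFlow fmax lam0 f) {e : N.E} (he : N.dst e ≠ N.destination) :
    ENNReal.ofReal (f e) ≤ ∑ e' ∈ N.outLinks (N.dst e), ENNReal.ofReal (f e') := by
  rw [← ENNReal.ofReal_sum_of_nonneg fun e' _ => (hf.1 e').1,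
    hf.2.2 _ (dst_ne_origin e) he]
  exact ENNReal.ofReal_le_ofReal
    (Finset.single_le_sum (fun e' _ => (hf.1 e').1) (mem_inLinks.2 rfl))

lemma IsBackwardRecursion.le_sum_min (hd : N.IsBackwardRecursion fmax f d)
    {v : Fin (N.n + 1)} (hv : v ≠ N.destination) {x : N.E → ℝ}
    (hx : ∀ e ∈ N.outLinks v, x e ∈ Icc 0 (fmax e))
    (hxf : ∑ e ∈ N.outLinks v, (fmax e - x e) ≤ ∑ e ∈ N.outLinks v, f e) :
    d v ≤ ∑ e ∈ N.outLinks v, min (ENNReal.ofReal (x e)) (d (N.dst e)) := by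
  have hx_eq : ∀ e ∈ N.outLinks v, (↑(N.outLinks v) : Set N.E).indicator x e = x e :=
    fun e he => indicator_of_mem (Finset.mem_coe.2 he) x
  rw [hd.2 v hv]
  refine sInf_le ⟨_, ⟨fun e he => hx_eq e he ▸ hx e he,
    fun e he => indicator_of_notMem (by simpa using he) x, ?_⟩, ?_⟩
  · refine (Finset.sum_congr rfl fun e he => ?_).trans_le hxf
    simp only [hx_eq e he]
  · exact Finset.sum_congr rfl fun e he => by simp only [hx_eq e he]

lemma IsBackwardRecursion.ofReal_minResidualCapacity_le (hd : N.IsBackwardRecursion fmax f d)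
    (v : Fin (N.n + 1)) : ENNReal.ofReal (N.minResidualCapacity fmax f) ≤ d v := by
  induction v using WellFoundedGT.induction with
  | _ v ih =>
  by_cases hv : v = N.destination
  · simp [hv, hd.1]
  rw [hd.2 v hv]
  refine le_sInf ?_
  rintro _ ⟨x, ⟨hx, -, hxf⟩, rfl⟩
  set r := ENNReal.ofReal (N.minResidualCapacity fmax f)
  have hr : r ≤ ∑ e ∈ N.outLinks v, ENNReal.ofReal (x e) := by
    rw [← ENNReal.ofReal_sum_of_nonneg fun e he => (hx e he).1]
    refine ENNReal.ofReal_le_ofReal ((N.minResidualCapacity_le fmax f hv).trans ?_)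
    rw [residualCapacity, Finset.sum_sub_distrib] at *
    linarith
  calc r ≤ ∑ e ∈ N.outLinks v, min (ENNReal.ofReal (x e)) r := Finset.le_sum_min_of_le_sum hr
    _ ≤ N.cval d v x := Finset.sum_le_sum fun e he =>
      min_le_min_left _ (ih _ (mem_outLinks.1 he ▸ N.src_lt_dst e))

lemma IsBackwardRecursion.add_sum_le_sum_cutOutLinksFrom (hd : N.IsBackwardRecursion fmax f d)
    (htree : N.TreeLike) {lam0 : ℝ} (hf : N.IsEquilibriumFlow fmax lam0 f)
    {U : Finset (Fin (N.n + 1))} (hU : N.destination ∉ U) {v : Fin (N.n + 1)} (hvU : v ∈ U)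
    (hv : N.Reachable N.origin v) :
    d v + ∑ e ∈ N.outLinks v, ENNReal.ofReal (f e) ≤
      ∑ g ∈ N.cutOutLinksFrom U v, ENNReal.ofReal (fmax g) := by
  classical
  induction v using WellFoundedGT.induction with
  | _ v ih =>
  set x : N.E → ℝ := fun e => if N.dst e ∈ U then fmax e else fmax e - f e
  have hx : ∀ e ∈ N.outLinks v, x e ∈ Icc 0 (fmax e) := fun e _ => by
    have := hf.1 e
    simp only [x, mem_Icc] at this ⊢
    split_ifs <;> constructor <;> linarith
  have hdv := hd.le_sum_min (fun h => hU (h ▸ hvU)) hx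
    (Finset.sum_le_sum fun e _ => by simp only [x]; split_ifs <;> linarith [(hf.1 e).1])
  calc d v + ∑ e ∈ N.outLinks v, ENNReal.ofReal (f e)
      ≤ ∑ e ∈ N.outLinks v, (min (ENNReal.ofReal (x e)) (d (N.dst e)) + ENNReal.ofReal (f e)) := by
        rw [Finset.sum_add_distrib]
        gcongr
    _ ≤ ∑ e ∈ N.outLinks v, ∑ g ∈ (if N.dst e ∈ U then N.cutOutLinksFrom U (N.dst e) else {e}),
          ENNReal.ofReal (fmax g) := Finset.sum_le_sum fun e he => by
        have hve : v < N.dst e := mem_outLinks.1 he ▸ N.src_lt_dst e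
        simp only [x]
        split_ifs with heU
        · calc min (ENNReal.ofReal (fmax e)) (d (N.dst e)) + ENNReal.ofReal (f e)
              ≤ d (N.dst e) + ∑ e' ∈ N.outLinks (N.dst e), ENNReal.ofReal (f e') :=
                add_le_add (min_le_right _ _)
                  (hf.ofReal_le_sum_outLinks_dst fun h => hU (h ▸ heU))
            _ ≤ _ := ih _ hve heU (hv.trans (mem_outLinks.1 he ▸ reachable_src_dst e))
        · rw [Finset.sum_singleton]
          calc min (ENNReal.ofReal (fmax e - f e)) (d (N.dst e)) + ENNReal.ofReal (f e)
              ≤ ENNReal.ofReal (fmax e - f e) + ENNReal.ofReal (f e) := by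
                gcongr
                exact min_le_left _ _
            _ = ENNReal.ofReal (fmax e) := by
                rw [← ENNReal.ofReal_add (sub_nonneg.2 (hf.1 e).2) (hf.1 e).1, sub_add_cancel]
    _ ≤ ∑ g ∈ N.cutOutLinksFrom U v, ENNReal.ofReal (fmax g) :=
        htree.sum_sum_cutOutLinksFrom_le hU hvU hv _

end BackwardRecursion

end FlowNetwork

theorem d0_bounds_general (N : FlowNetwork) (htree : N.TreeLike)
    (fmax : N.E → ℝ)
    (lam0 : ℝ) (hlam0 : 0 ≤ lam0)
    (f : N.E → ℝ) (hf : N.IsEquilibriumFlow fmax lam0 f)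
    (d : Fin (N.n + 1) → ℝ≥0∞) (hd : N.IsBackwardRecursion fmax f d) :
    ENNReal.ofReal (N.minResidualCapacity fmax f) ≤ d N.origin ∧
      d N.origin ≤ ENNReal.ofReal (N.minCutCapacity fmax - lam0) := by
  refine ⟨hd.ofReal_minResidualCapacity_le N.origin, ?_⟩
  obtain ⟨U, hU, hC⟩ := N.exists_isCut_minCutCapacity_eq fmax
  have hfmax : ∀ e, 0 ≤ fmax e := fun e => (hf.1 e).1.trans (hf.1 e).2
  have hflow : d N.origin + ENNReal.ofReal lam0 ≤ ENNReal.ofReal (N.minCutCapacity fmax) :=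
    calc d N.origin + ENNReal.ofReal lam0
        = d N.origin + ∑ e ∈ N.outLinks N.origin, ENNReal.ofReal (f e) := by
          rw [← hf.2.1, ENNReal.ofReal_sum_of_nonneg fun e _ => (hf.1 e).1]
      _ ≤ ∑ g ∈ N.cutOutLinksFrom U N.origin, ENNReal.ofReal (fmax g) :=
          hd.add_sum_le_sum_cutOutLinksFrom htree hf hU.2 hU.1 (.refl _)
      _ ≤ ∑ g ∈ N.cutOutLinks U, ENNReal.ofReal (fmax g) :=
          Finset.sum_le_sum_of_subset FlowNetwork.cutOutLinksFrom_subset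
      _ = ENNReal.ofReal (N.minCutCapacity fmax) := by
          rw [hC, FlowNetwork.cutCapacity, ENNReal.ofReal_sum_of_nonneg fun e _ => hfmax e]
  rw [ENNReal.ofReal_sub _ hlam0]
  exact ENNReal.le_sub_of_add_le_right ENNReal.ofReal_ne_top hflow

/-- **Proposition 2.** For a tree-like topology and an equilibrium flow `f° ∈ F(λ0)`,
the quantity `d_0` produced by the backward recursion satisfies
`R(f°) ≤ d_0 ≤ C - λ0`. -/
theorem d0_bounds (N : FlowNetwork) (hconn : N.Connected) (htree : N.TreeLike)
    (fmax : N.E → ℝ) (hfmax : ∀ e, 0 < fmax e)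
    (lam0 : ℝ) (hlam0 : 0 ≤ lam0)
    (f : N.E → ℝ) (hf : N.IsEquilibriumFlow fmax lam0 f)
    (d : Fin (N.n + 1) → ℝ≥0∞) (hd : N.IsBackwardRecursion fmax f d) :
    ENNReal.ofReal (N.minResidualCapacity fmax f) ≤ d N.origin ∧
      d N.origin ≤ ENNReal.ofReal (N.minCutCapacity fmax - lam0) :=
  d0_bounds_general N htree fmax lam0 hlam0 f hf d hd
end

section
/- Let f°∈F(λ0) be an equilibrium flow. Then for every non-destination node 0≤v<n, the quantity d_v produced by the backward recursion satisfies d_v ≥ min{ R_v(f°), min_{e∈E⁺_v} d_{τ(e)} } (where the inner minimum over an empty comparison with +∞ is interpreted in the extended reals). -/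
open Filter Set Topology MeasureTheory
open scoped BigOperators ENNReal

/-- If `b i ≤ a i` for some `i ∈ s`, that single summand already dominates `s.inf b`;
otherwise every summand is `a i`. -/
theorem Finset.min_sum_inf_le_sum_min {ι α : Type*} [AddCommMonoid α] [LinearOrder α]
    [IsOrderedAddMonoid α] [CanonicallyOrderedAdd α] [OrderTop α]
    (s : Finset ι) (a b : ι → α) :
    min (∑ i ∈ s, a i) (s.inf b) ≤ ∑ i ∈ s, min (a i) (b i) := by
  by_cases hsmall : ∃ i ∈ s, b i ≤ a i
  · obtain ⟨i, hi, hba⟩ := hsmall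
    calc min (∑ i ∈ s, a i) (s.inf b) ≤ s.inf b := min_le_right _ _
      _ ≤ b i := Finset.inf_le hi
      _ = min (a i) (b i) := (min_eq_right hba).symm
      _ ≤ ∑ i ∈ s, min (a i) (b i) :=
          Finset.single_le_sum (f := fun i => min (a i) (b i)) (fun _ _ => zero_le) hi
  · push Not at hsmall
    calc min (∑ i ∈ s, a i) (s.inf b) ≤ ∑ i ∈ s, a i := min_le_left _ _
      _ = ∑ i ∈ s, min (a i) (b i) :=
          Finset.sum_congr rfl fun i hi => (min_eq_left (hsmall i hi).le).symm

namespace FlowNetwork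

variable (N : FlowNetwork) {fmax f x : N.E → ℝ} {v : Fin (N.n + 1)}

theorem residualCapacity_le_sum_of_mem_Xset
    (hx : x ∈ N.Xset fmax v (∑ e ∈ N.outLinks v, f e)) :
    N.residualCapacity fmax f v ≤ ∑ e ∈ N.outLinks v, x e := by
  have hslack := hx.2.2
  rw [Finset.sum_sub_distrib] at hslack
  rw [residualCapacity, Finset.sum_sub_distrib]
  linarith

theorem min_residualCapacity_inf_le_cval (d : Fin (N.n + 1) → ℝ≥0∞)
    (hx : x ∈ N.Xset fmax v (∑ e ∈ N.outLinks v, f e)) :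
    min (ENNReal.ofReal (N.residualCapacity fmax f v))
      ((N.outLinks v).inf fun e => d (N.dst e)) ≤ N.cval d v x := by
  have hsum : ENNReal.ofReal (∑ e ∈ N.outLinks v, x e)
      = ∑ e ∈ N.outLinks v, ENNReal.ofReal (x e) :=
    ENNReal.ofReal_sum_of_nonneg fun e he => (hx.1 e he).1
  calc min (ENNReal.ofReal (N.residualCapacity fmax f v))
        ((N.outLinks v).inf fun e => d (N.dst e))
      ≤ min (∑ e ∈ N.outLinks v, ENNReal.ofReal (x e))
        ((N.outLinks v).inf fun e => d (N.dst e)) := by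
        gcongr
        rw [← hsum]
        exact ENNReal.ofReal_le_ofReal (N.residualCapacity_le_sum_of_mem_Xset hx)
    _ ≤ N.cval d v x := Finset.min_sum_inf_le_sum_min _ _ _

end FlowNetwork

theorem d_ge_min_residual_or_downstream_general (N : FlowNetwork)
    (fmax : N.E → ℝ)
    (f : N.E → ℝ)
    (d : Fin (N.n + 1) → ℝ≥0∞) (hd : N.IsBackwardRecursion fmax f d) :
    ∀ v, v ≠ N.destination →
      min (ENNReal.ofReal (N.residualCapacity fmax f v))
        ((N.outLinks v).inf fun e => d (N.dst e)) ≤ d v := by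
  intro v hv
  rw [hd.2 v hv]
  exact le_sInf (forall_mem_image.2 fun x hx => N.min_residualCapacity_inf_le_cval d hx)

/-- For an equilibrium flow `f° ∈ F(λ0)` and every non-destination node `v`,
`d_v ≥ min { R_v(f°), min_{e ∈ E⁺_v} d_{τ(e)} }` (in the extended nonnegative reals,
an empty inner minimum being `+∞`). -/
theorem d_ge_min_residual_or_downstream (N : FlowNetwork) (hconn : N.Connected)
    (fmax : N.E → ℝ) (hfmax : ∀ e, 0 < fmax e)
    (lam0 : ℝ) (hlam0 : 0 ≤ lam0)
    (f : N.E → ℝ) (hf : N.IsEquilibriumFlow fmax lam0 f)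
    (d : Fin (N.n + 1) → ℝ≥0∞) (hd : N.IsBackwardRecursion fmax f d) :
    ∀ v, v ≠ N.destination →
      min (ENNReal.ofReal (N.residualCapacity fmax f v))
        ((N.outLinks v).inf fun e => d (N.dst e)) ≤ d v :=
  d_ge_min_residual_or_downstream_general N fmax f d hd
end

section
/- Let f°∈F(λ0) be an equilibrium flow. Then for every non-destination node 0≤v<n, the quantity d_v produced by the backward recursion satisfies d_v ≤ R_v(f°), the residual capacity of node v. In particular d_v is finite for every 0≤v<n. -/
open Filter Set Topology MeasureTheory
open scoped BigOperators ENNReal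

/-! Filling every outgoing link of `v` up to capacity, `x = f^max − f°` on `E⁺_v`, is feasible
in the minimisation defining `d_v`: its unused capacity is exactly `λ°_v`. Its cost is at most
`Σ x_e = R_v(f°)`, since each summand `min{x_e, d_{τ(e)}}` is at most `x_e`. -/

namespace FlowNetwork

variable (N : FlowNetwork) {fmax f x : N.E → ℝ} {d : Fin (N.n + 1) → ℝ≥0∞} {v : Fin (N.n + 1)}

theorem indicator_sub_mem_Xset (hf : ∀ e ∈ N.outLinks v, f e ∈ Icc 0 (fmax e)) :
    (N.outLinks v : Set N.E).indicator (fmax - f) ∈ N.Xset fmax v (∑ e ∈ N.outLinks v, f e) := by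
  refine ⟨fun e he => ?_, fun e he => Set.indicator_of_notMem (by exact_mod_cast he) _, ?_⟩
  · rw [Set.indicator_of_mem (by exact_mod_cast he), Pi.sub_apply]
    obtain ⟨hf0, hfmax⟩ := hf e he
    constructor <;> linarith
  · refine (Finset.sum_congr rfl fun e he => ?_).le
    rw [Set.indicator_of_mem (by exact_mod_cast he), Pi.sub_apply, sub_sub_cancel]

theorem cval_le_ofReal_sum (hx : ∀ e ∈ N.outLinks v, 0 ≤ x e) :
    N.cval d v x ≤ ENNReal.ofReal (∑ e ∈ N.outLinks v, x e) := by
  rw [ENNReal.ofReal_sum_of_nonneg hx]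
  exact Finset.sum_le_sum fun e _ => min_le_left _ _

theorem IsBackwardRecursion.le_cval (hd : N.IsBackwardRecursion fmax f d)
    (hv : v ≠ N.destination) (hx : x ∈ N.Xset fmax v (∑ e ∈ N.outLinks v, f e)) :
    d v ≤ N.cval d v x := by
  rw [hd.2 v hv]
  exact sInf_le ⟨x, hx, rfl⟩

end FlowNetwork

theorem d_le_residual_general (N : FlowNetwork) (fmax : N.E → ℝ) (lam0 : ℝ)
    (f : N.E → ℝ) (hf : N.IsEquilibriumFlow fmax lam0 f)
    (d : Fin (N.n + 1) → ℝ≥0∞) (hd : N.IsBackwardRecursion fmax f d) :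
    ∀ v, v ≠ N.destination →
      d v ≤ ENNReal.ofReal (N.residualCapacity fmax f v) ∧ d v ≠ ⊤ := by
  intro v hv
  have hxmem := N.indicator_sub_mem_Xset (v := v) fun e _ => hf.1 e
  have hx_nonneg := fun e (he : e ∈ N.outLinks v) => (hxmem.1 e he).1
  have hle : d v ≤ ENNReal.ofReal (N.residualCapacity fmax f v) := by
    refine (hd.le_cval N hv hxmem).trans ((N.cval_le_ofReal_sum hx_nonneg).trans_eq ?_)
    refine congrArg ENNReal.ofReal (Finset.sum_congr rfl fun e he => ?_)
    exact Set.indicator_of_mem (by exact_mod_cast he) _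
  exact ⟨hle, ne_top_of_le_ne_top ENNReal.ofReal_ne_top hle⟩

/-- For an equilibrium flow `f° ∈ F(λ0)` and every non-destination node `v`,
`d_v ≤ R_v(f°)`; in particular `d_v` is finite. -/
theorem d_le_residual (N : FlowNetwork) (hconn : N.Connected)
    (fmax : N.E → ℝ) (hfmax : ∀ e, 0 < fmax e)
    (lam0 : ℝ) (hlam0 : 0 ≤ lam0)
    (f : N.E → ℝ) (hf : N.IsEquilibriumFlow fmax lam0 f)
    (d : Fin (N.n + 1) → ℝ≥0∞) (hd : N.IsBackwardRecursion fmax f d) :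
    ∀ v, v ≠ N.destination →
      d v ≤ ENNReal.ofReal (N.residualCapacity fmax f v) ∧ d v ≠ ⊤ :=
  d_le_residual_general N fmax lam0 f hf d hd
end
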